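/- arXiv:1107.1659 — 5 statements merged into one kernel-verified Lean document; each statement's English description precedes it below -/
import Mathlib

section
/- Let A be an m×m Kirchhoff matrix. There exists a strictly positive vector b ∈ ℝ^m with A·b = 0 if and only if the directed graph associated with A (edge j → i when A_{ij} > 0, i ≠ j) is weakly reversible, i.e., every connected component of the underlying graph is strongly connected. -/
open Matrix Finset

def IsKirchhoff {m : ℕ} (A : Matrix (Fin m) (Fin m) ℝ) : Prop :=
  (∀ i j, i ≠ j → 0 ≤ A i j) ∧ ∀ j, ∑ i, A i j = 0

/-- Edge `j → i` of the reaction graph: `A i j > 0`, `i ≠ j`. -/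
def step {m : ℕ} (A : Matrix (Fin m) (Fin m) ℝ) (j i : Fin m) : Prop :=
  i ≠ j ∧ 0 < A i j

/-- Weak reversibility: whenever there is a directed path from `u` to `v`,
there is a directed path from `v` to `u`. -/
def WeaklyReversible {m : ℕ} (A : Matrix (Fin m) (Fin m) ℝ) : Prop :=
  ∀ u v, Relation.ReflTransGen (step A) u v → Relation.ReflTransGen (step A) v u

/-- generic summation identity: summing the rows of `A·b = 0` over a set `S`. -/
lemma sum_rows_ker {n : Type*} [Fintype n] (A : Matrix n n ℝ) (b : n → ℝ)
    (hb : A.mulVec b = 0) (S : Finset n) :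
    ∑ j, (∑ i ∈ S, A i j) * b j = 0 := by
  have h0 : ∑ i ∈ S, ∑ j, A i j * b j = 0 := by
    refine Finset.sum_eq_zero fun i _ => ?_
    have := congrFun hb i
    simpa [Matrix.mulVec, dotProduct] using this
  calc ∑ j, (∑ i ∈ S, A i j) * b j = ∑ j, ∑ i ∈ S, A i j * b j := by
        simp [Finset.sum_mul]
    _ = ∑ i ∈ S, ∑ j, A i j * b j := Finset.sum_comm
    _ = 0 := h0

/-- If `A b = 0` with `b > 0` and `S` is closed under out-edges,
then there are no edges into `S` from outside. -/
lemma no_in_edges {m : ℕ} (A : Matrix (Fin m) (Fin m) ℝ) (hA : IsKirchhoff A)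
    (b : Fin m → ℝ) (hbpos : ∀ j, 0 < b j) (hb : A.mulVec b = 0)
    (S : Finset (Fin m)) (hS : ∀ j ∈ S, ∀ i, step A j i → i ∈ S) :
    ∀ i ∈ S, ∀ j, j ∉ S → A i j = 0 := by
  classical
  have h1 : ∀ j ∈ S, ∀ i, i ∉ S → A i j = 0 := by
    intro j hj i hi
    by_contra h
    have hij : i ≠ j := fun e => hi (e ▸ hj)
    exact hi (hS j hj i ⟨hij, lt_of_le_of_ne (hA.1 i j hij) (Ne.symm h)⟩)
  have hsum := sum_rows_ker A b hb S
  have hterm : ∀ j ∈ Finset.univ, 0 ≤ (∑ i ∈ S, A i j) * b j := by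
    intro j _
    by_cases hj : j ∈ S
    · have hz : ∑ i ∈ S, A i j = 0 := by
        have hsplit := Finset.sum_add_sum_compl S (fun i => A i j)
        have h0 : ∑ i ∈ Sᶜ, A i j = 0 :=
          Finset.sum_eq_zero fun i hi => h1 j hj i (Finset.mem_compl.mp hi)
        have hc := hA.2 j
        rw [h0, hc] at hsplit
        linarith
      simp [hz]
    · have h2 : 0 ≤ ∑ i ∈ S, A i j :=
        Finset.sum_nonneg fun i hi => hA.1 i j (fun e => hj (e ▸ hi))
      exact mul_nonneg h2 (le_of_lt (hbpos j))
  have hall := (Finset.sum_eq_zero_iff_of_nonneg hterm).mp hsum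
  intro i hi j hj
  have hcol : (∑ i ∈ S, A i j) * b j = 0 := hall j (Finset.mem_univ j)
  have hcol0 : ∑ i ∈ S, A i j = 0 := by
    rcases mul_eq_zero.mp hcol with h | h
    · exact h
    · exact absurd h (hbpos j).ne'
  exact (Finset.sum_eq_zero_iff_of_nonneg
    (fun i hi => hA.1 i j (fun e => hj (e ▸ hi)))).mp hcol0 i hi

/-- An irreducible Kirchhoff matrix has a strictly positive kernel vector. -/
lemma irreducible_pos_kernel {n : Type*} [Fintype n] [DecidableEq n] [Nonempty n]
    (B : Matrix n n ℝ) (hoff : ∀ i j, i ≠ j → 0 ≤ B i j)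
    (hcol : ∀ j, ∑ i, B i j = 0)
    (hconn : ∀ u w : n, Relation.ReflTransGen (fun j i => i ≠ j ∧ 0 < B i j) u w) :
    ∃ b : n → ℝ, (∀ i, 0 < b i) ∧ B.mulVec b = 0 := by
  classical
  -- determinant is zero since columns sum to zero
  have hdet : B.det = 0 := by
    have h1 : Bᵀ.mulVec (fun _ => 1) = 0 := by
      funext j
      simp [Matrix.mulVec, dotProduct, Matrix.transpose_apply, hcol j]
    have hne : (fun _ => (1:ℝ)) ≠ (0 : n → ℝ) := by
      intro h
      have := congrFun h (Classical.arbitrary n)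
      norm_num at this
    have := Matrix.exists_mulVec_eq_zero_iff.mp ⟨_, hne, h1⟩
    rwa [Matrix.det_transpose] at this
  obtain ⟨b0, hb0ne, hb0⟩ := Matrix.exists_mulVec_eq_zero_iff.mpr hdet
  obtain ⟨j0, hj0⟩ : ∃ j, b0 j ≠ 0 := by
    by_contra h; push_neg at h; exact hb0ne (funext h)
  obtain ⟨c, hc, j1, hj1⟩ : ∃ c, B.mulVec c = 0 ∧ ∃ j, 0 < c j := by
    rcases lt_or_gt_of_ne hj0 with h | h
    · refine ⟨-b0, ?_, j0, by simpa using h⟩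
      rw [Matrix.mulVec_neg, hb0, neg_zero]
    · exact ⟨b0, hb0, j0, h⟩
  set S : Finset n := Finset.univ.filter (fun j => 0 < c j) with hSdef
  have hj1S : j1 ∈ S := by simp [hSdef, hj1]
  have hsum := sum_rows_ker B c hc S
  have hterm : ∀ j ∈ Finset.univ, (∑ i ∈ S, B i j) * c j ≤ 0 := by
    intro j _
    by_cases hj : j ∈ S
    · have hcj : 0 < c j := by simpa [hSdef] using hj
      have hcompl : 0 ≤ ∑ i ∈ Sᶜ, B i j := by
        refine Finset.sum_nonneg fun i hi => ?_
        have : i ≠ j := fun e => (Finset.mem_compl.mp hi) (e ▸ hj)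
        exact hoff i j this
      have hsplit := Finset.sum_add_sum_compl S (fun i => B i j)
      rw [hcol j] at hsplit
      have : ∑ i ∈ S, B i j ≤ 0 := by linarith
      exact mul_nonpos_of_nonpos_of_nonneg this (le_of_lt hcj) |>.trans_eq rfl
    · have hcj : c j ≤ 0 := by
        by_contra h
        exact hj (by simp [hSdef]; linarith)
      have h2 : 0 ≤ ∑ i ∈ S, B i j :=
        Finset.sum_nonneg fun i hi => hoff i j (fun e => hj (e ▸ hi))
      exact mul_nonpos_of_nonneg_of_nonpos h2 hcj
  have hall : ∀ j ∈ Finset.univ, (∑ i ∈ S, B i j) * c j = 0 := by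
    have := Finset.sum_eq_zero_iff_of_nonpos hterm
    exact this.mp hsum
  -- S is closed under out-edges
  have hclosed : ∀ j ∈ S, ∀ i, (i ≠ j ∧ 0 < B i j) → i ∈ S := by
    intro j hj i hstep
    by_contra hiS
    have hcj : 0 < c j := by simpa [hSdef] using hj
    have h0 : (∑ i ∈ S, B i j) * c j = 0 := hall j (Finset.mem_univ j)
    have hs0 : ∑ i ∈ S, B i j = 0 := by
      rcases mul_eq_zero.mp h0 with h | h
      · exact h
      · exact absurd h hcj.ne'
    have hcompl0 : ∑ i ∈ Sᶜ, B i j = 0 := by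
      have hsplit := Finset.sum_add_sum_compl S (fun i => B i j)
      rw [hs0, hcol j] at hsplit; linarith
    have hiBc : B i j = 0 := by
      refine (Finset.sum_eq_zero_iff_of_nonneg ?_).mp hcompl0 i (Finset.mem_compl.mpr hiS)
      intro k hk
      exact hoff k j (fun e => (Finset.mem_compl.mp hk) (e ▸ hj))
    exact hiBc ▸ hstep.2 |>.false
  -- strong connectivity: everything is in S
  have hallS : ∀ i, i ∈ S := by
    intro i
    have hpath := hconn j1 i
    induction hpath with
    | refl => exact hj1S
    | tail h1 h2 ih => exact hclosed _ ih _ h2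
  refine ⟨c, fun i => ?_, hc⟩
  have := hallS i
  simpa [hSdef] using this

/-- Per-vertex component kernel vector. -/
lemma component_vec {m : ℕ} (A : Matrix (Fin m) (Fin m) ℝ) (hA : IsKirchhoff A)
    (hwr : WeaklyReversible A) (v : Fin m) :
    ∃ c : Fin m → ℝ, (∀ w, 0 ≤ c w) ∧ 0 < c v ∧ A.mulVec c = 0 := by
  classical
  set C : Finset (Fin m) :=
    Finset.univ.filter (fun w => Relation.ReflTransGen (step A) v w) with hCdef
  have hmem : ∀ w, w ∈ C ↔ Relation.ReflTransGen (step A) v w := by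
    intro w; simp [hCdef]
  have hvC : v ∈ C := (hmem v).mpr .refl
  have hclosed : ∀ j ∈ C, ∀ i, step A j i → i ∈ C := by
    intro j hj i hstep
    exact (hmem i).mpr (((hmem j).mp hj).tail hstep)
  have hzero : ∀ j ∈ C, ∀ i, i ∉ C → A i j = 0 := by
    intro j hj i hi
    by_contra h
    have hij : i ≠ j := fun e => hi (e ▸ hj)
    exact hi (hclosed j hj i ⟨hij, lt_of_le_of_ne (hA.1 i j hij) (Ne.symm h)⟩)
  haveI : Nonempty {x // x ∈ C} := ⟨⟨v, hvC⟩⟩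
  set B : Matrix {x // x ∈ C} {x // x ∈ C} ℝ := fun i j => A i j with hBdef
  have hBoff : ∀ i j : {x // x ∈ C}, i ≠ j → 0 ≤ B i j := by
    intro i j hij
    exact hA.1 i j (fun e => hij (Subtype.ext e))
  have hBcol : ∀ j : {x // x ∈ C}, ∑ i, B i j = 0 := by
    intro j
    have h1 : ∑ i : {x // x ∈ C}, B i j = ∑ i ∈ C, A i j.1 :=
      Finset.sum_coe_sort C (fun i => A i j.1)
    have hsplit := Finset.sum_add_sum_compl C (fun i => A i j.1)
    have h0 : ∑ i ∈ Cᶜ, A i j.1 = 0 :=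
      Finset.sum_eq_zero fun i hi => hzero j.1 j.2 i (Finset.mem_compl.mp hi)
    rw [h0, hA.2 j.1] at hsplit
    rw [h1]; linarith
  -- lifting paths into the subtype
  have hlift : ∀ (x : Fin m) (hx : x ∈ C) (y : Fin m),
      Relation.ReflTransGen (step A) x y →
      ∃ hy : y ∈ C, Relation.ReflTransGen
        (fun j i : {x // x ∈ C} => i ≠ j ∧ 0 < B i j) ⟨x, hx⟩ ⟨y, hy⟩ := by
    intro x hx y hR
    induction hR with
    | refl => exact ⟨hx, .refl⟩
    | @tail z y h1 h2 ih =>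
      obtain ⟨hz, p⟩ := ih
      have hy : y ∈ C := hclosed z hz y h2
      refine ⟨hy, p.tail ⟨fun e => h2.1 (congrArg Subtype.val e), h2.2⟩⟩
  have hBconn : ∀ u w : {x // x ∈ C}, Relation.ReflTransGen
      (fun j i : {x // x ∈ C} => i ≠ j ∧ 0 < B i j) u w := by
    intro u w
    have hu : Relation.ReflTransGen (step A) v u.1 := (hmem u.1).mp u.2
    have hw : Relation.ReflTransGen (step A) v w.1 := (hmem w.1).mp w.2
    have huw : Relation.ReflTransGen (step A) u.1 w.1 := (hwr v u.1 hu).trans hw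
    obtain ⟨hw2, p⟩ := hlift u.1 u.2 w.1 huw
    have : (⟨w.1, hw2⟩ : {x // x ∈ C}) = w := Subtype.ext rfl
    rwa [this] at p
  obtain ⟨b', hb'pos, hb'⟩ := irreducible_pos_kernel B hBoff hBcol hBconn
  refine ⟨fun w => if h : w ∈ C then b' ⟨w, h⟩ else 0, ?_, ?_, ?_⟩
  · intro w
    by_cases h : w ∈ C
    · simp only [dif_pos h]; exact le_of_lt (hb'pos ⟨w, h⟩)
    · simp [dif_neg h]
  · simp only [dif_pos hvC]; exact hb'pos ⟨v, hvC⟩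
  · funext i
    show ∑ j, A i j * (if h : j ∈ C then b' ⟨j, h⟩ else 0) = (0 : Fin m → ℝ) i
    have hsplit := Finset.sum_add_sum_compl C
      (fun j => A i j * (if h : j ∈ C then b' ⟨j, h⟩ else 0))
    have hcompl : ∑ j ∈ Cᶜ, A i j * (if h : j ∈ C then b' ⟨j, h⟩ else 0) = 0 := by
      refine Finset.sum_eq_zero fun j hj => ?_
      rw [dif_neg (Finset.mem_compl.mp hj), mul_zero]
    have hCsum : ∑ j ∈ C, A i j * (if h : j ∈ C then b' ⟨j, h⟩ else 0)
        = ∑ j : {x // x ∈ C}, A i j.1 * b' j := by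
      rw [← Finset.sum_coe_sort C]
      refine Finset.sum_congr rfl fun j _ => ?_
      rw [dif_pos j.2]
    by_cases hi : i ∈ C
    · have hker := congrFun hb' ⟨i, hi⟩
      have : ∑ j : {x // x ∈ C}, A i j.1 * b' j = 0 := by
        simpa [Matrix.mulVec, dotProduct, hBdef] using hker
      rw [← hsplit, hcompl, hCsum, this, add_zero]; rfl
    · have hCz : ∑ j ∈ C, A i j * (if h : j ∈ C then b' ⟨j, h⟩ else 0) = 0 := by
        refine Finset.sum_eq_zero fun j hj => ?_
        rw [hzero j hj i hi, zero_mul]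
      rw [← hsplit, hcompl, hCz, add_zero]; rfl

theorem stmt2 {m : ℕ} (A : Matrix (Fin m) (Fin m) ℝ) (hA : IsKirchhoff A) :
    (∃ b : Fin m → ℝ, (∀ j, 0 < b j) ∧ A.mulVec b = 0) ↔ WeaklyReversible A := by
  classical
  constructor
  · rintro ⟨b, hbpos, hb⟩ u v huv
    set S : Finset (Fin m) :=
      Finset.univ.filter (fun w => Relation.ReflTransGen (step A) v w) with hSdef
    have hmem : ∀ w, w ∈ S ↔ Relation.ReflTransGen (step A) v w := by
      intro w; simp [hSdef]
    have hclosed : ∀ j ∈ S, ∀ i, step A j i → i ∈ S := by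
      intro j hj i hstep
      exact (hmem i).mpr (((hmem j).mp hj).tail hstep)
    have hzero := no_in_edges A hA b hbpos hb S hclosed
    have key : ∀ x, Relation.ReflTransGen (step A) x v → x ∈ S := by
      intro x hx
      induction hx using Relation.ReflTransGen.head_induction_on with
      | refl => exact (hmem v).mpr .refl
      | head h1 h2 ih =>
        rename_i a c
        by_contra haS
        have := hzero c ih a haS
        have h3 := h1.2
        linarith
    exact (hmem u).mp (key u huv)
  · intro hwr
    choose c hc0 hcv hck using fun v => component_vec A hA hwr v
    refine ⟨fun w => ∑ v, c v w, ?_, ?_⟩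
    · intro j
      exact Finset.sum_pos' (fun v _ => hc0 v j) ⟨j, Finset.mem_univ j, hcv j⟩
    · funext i
      have hswap : (A.mulVec fun w => ∑ v, c v w) i = ∑ v, (A.mulVec (c v)) i := by
        simp only [Matrix.mulVec, dotProduct, Finset.mul_sum]
        exact Finset.sum_comm
      rw [hswap]
      simp [hck]
end

section
/- Let A be an m×m Kirchhoff matrix whose associated directed graph is strongly connected (and has at least one edge, m ≥ 2). Then the kernel of A is one-dimensional and is spanned by a strictly positive vector. -/
open Matrix Finset

/-!
Since `1 ᵥ* A = 0`, `A` is singular. If `A x = 0`, every entry of `A x⁺` is nonnegative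
(the off-diagonal entries of `A` are) and the entries sum to `0`, so `A x⁺ = 0`: the kernel
contains a nonzero `y ≥ 0`. Row `i` of `A y = 0` forces `y j = 0` along each edge `j → i` with
`y i = 0`, so by strong connectedness such a `y` is strictly positive. For a positive kernel
vector `b` and any kernel vector `x`, the largest `t` with `x - t • b ≥ 0` gives a nonnegative
kernel vector with a zero entry, hence `x = t • b`.
-/

namespace IsKirchhoff

variable {m : ℕ} {A : Matrix (Fin m) (Fin m) ℝ}

lemma one_vecMul (hA : IsKirchhoff A) : 1 ᵥ* A = 0 := by
  ext j
  simpa [vecMul, dotProduct] using hA.2 j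

lemma sum_mulVec (hA : IsKirchhoff A) (v : Fin m → ℝ) : ∑ i, (A *ᵥ v) i = 0 := by
  have h := dotProduct_mulVec 1 A v
  rw [hA.one_vecMul, zero_dotProduct] at h
  simpa [dotProduct] using h

lemma det_eq_zero [NeZero m] (hA : IsKirchhoff A) : A.det = 0 :=
  exists_vecMul_eq_zero_iff.mp ⟨1, one_ne_zero, hA.one_vecMul⟩

lemma mul_apply_nonneg (hA : IsKirchhoff A) {z : Fin m → ℝ} (hz : 0 ≤ z) {i : Fin m}
    (hzi : z i = 0) (k : Fin m) : 0 ≤ A i k * z k := by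
  rcases eq_or_ne i k with rfl | hik
  · simp [hzi]
  · exact mul_nonneg (hA.1 i k hik) (hz k)

lemma mulVec_apply_nonneg (hA : IsKirchhoff A) {z : Fin m → ℝ} (hz : 0 ≤ z) {i : Fin m}
    (hzi : z i = 0) : 0 ≤ (A *ᵥ z) i :=
  show 0 ≤ ∑ k, A i k * z k from sum_nonneg fun k _ => hA.mul_apply_nonneg hz hzi k

lemma mulVec_posPart_eq_zero (hA : IsKirchhoff A) {x : Fin m → ℝ} (hx : A *ᵥ x = 0) :
    A *ᵥ x⁺ = 0 := by
  have hnonneg : ∀ i, 0 ≤ (A *ᵥ x⁺) i := by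
    intro i
    rcases le_total (x i) 0 with hxi | hxi
    · exact hA.mulVec_apply_nonneg (posPart_nonneg x) (by simpa using hxi)
    · have h := hA.mulVec_apply_nonneg (z := x⁺ - x) (sub_nonneg.mpr (le_posPart x))
        (i := i) (by simp [posPart_of_nonneg hxi])
      rwa [mulVec_sub, hx, sub_zero] at h
  ext i
  exact (sum_eq_zero_iff_of_nonneg fun i _ => hnonneg i).mp (hA.sum_mulVec _) i (mem_univ i)

lemma exists_nonneg_mulVec_eq_zero [NeZero m] (hA : IsKirchhoff A) :
    ∃ y : Fin m → ℝ, 0 ≤ y ∧ y ≠ 0 ∧ A *ᵥ y = 0 := by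
  obtain ⟨x, hx0, hx⟩ := exists_mulVec_eq_zero_iff.mpr hA.det_eq_zero
  by_cases hpos : x⁺ = 0
  · refine ⟨x⁻, negPart_nonneg x, fun hneg => hx0 ?_, ?_⟩
    · rw [← posPart_sub_negPart x, hpos, hneg, sub_zero]
    · rw [← posPart_neg]
      exact hA.mulVec_posPart_eq_zero (by rw [mulVec_neg, hx, neg_zero])
  · exact ⟨x⁺, posPart_nonneg x, hpos, hA.mulVec_posPart_eq_zero hx⟩

lemma apply_eq_zero_of_step (hA : IsKirchhoff A) {y : Fin m → ℝ} (hy : 0 ≤ y)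
    (hAy : A *ᵥ y = 0) {i j : Fin m} (hji : step A j i) (hi : y i = 0) : y j = 0 := by
  have hrow : ∑ k, A i k * y k = 0 := congrFun hAy i
  have hj := (sum_eq_zero_iff_of_nonneg fun k _ => hA.mul_apply_nonneg hy hi k).mp hrow j
    (mem_univ j)
  exact (mul_eq_zero.mp hj).resolve_left hji.2.ne'

lemma apply_eq_zero_of_reflTransGen (hA : IsKirchhoff A) {y : Fin m → ℝ} (hy : 0 ≤ y)
    (hAy : A *ᵥ y = 0) {u v : Fin m} (huv : Relation.ReflTransGen (step A) u v)
    (hv : y v = 0) : y u = 0 := by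
  induction huv with
  | refl => exact hv
  | tail _ hbc ih => exact ih (hA.apply_eq_zero_of_step hy hAy hbc hv)

lemma eq_zero_of_apply_eq_zero (hA : IsKirchhoff A)
    (hconn : ∀ u v : Fin m, Relation.ReflTransGen (step A) u v) {y : Fin m → ℝ} (hy : 0 ≤ y)
    (hAy : A *ᵥ y = 0) {i : Fin m} (hi : y i = 0) : y = 0 :=
  funext fun u => hA.apply_eq_zero_of_reflTransGen hy hAy (hconn u i) hi

lemma pos_of_nonneg (hA : IsKirchhoff A)
    (hconn : ∀ u v : Fin m, Relation.ReflTransGen (step A) u v) {y : Fin m → ℝ} (hy : 0 ≤ y)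
    (hy0 : y ≠ 0) (hAy : A *ᵥ y = 0) (i : Fin m) : 0 < y i :=
  (hy i).lt_of_ne fun hi => hy0 (hA.eq_zero_of_apply_eq_zero hconn hy hAy hi.symm)

lemma eq_smul_of_mulVec_eq_zero [NeZero m] (hA : IsKirchhoff A)
    (hconn : ∀ u v : Fin m, Relation.ReflTransGen (step A) u v) {b : Fin m → ℝ}
    (hb : ∀ j, 0 < b j) (hAb : A *ᵥ b = 0) {x : Fin m → ℝ} (hx : A *ᵥ x = 0) :
    ∃ t : ℝ, x = t • b := by
  obtain ⟨i, hi⟩ := Finite.exists_min fun j => x j / b j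
  refine ⟨x i / b i, sub_eq_zero.mp ?_⟩
  refine hA.eq_zero_of_apply_eq_zero hconn (i := i) (fun j => ?_) ?_ ?_
  · have := (le_div_iff₀ (hb j)).mp (hi j)
    simpa using this
  · rw [mulVec_sub, mulVec_smul, hx, hAb, smul_zero, sub_zero]
  · simp [div_mul_cancel₀ _ (hb i).ne']

end IsKirchhoff

theorem stmt3_general {m : ℕ} (A : Matrix (Fin m) (Fin m) ℝ)
    (hA : IsKirchhoff A)
    (hconn : ∀ u v : Fin m, Relation.ReflTransGen (step A) u v) :
    ∃ b : Fin m → ℝ, (∀ j, 0 < b j) ∧ A.mulVec b = 0 ∧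
      ∀ x : Fin m → ℝ, A.mulVec x = 0 → ∃ t : ℝ, x = t • b := by
  rcases Nat.eq_zero_or_pos m with rfl | hm
  · exact ⟨0, finZeroElim, Subsingleton.elim _ _, fun x _ => ⟨0, Subsingleton.elim _ _⟩⟩
  have : NeZero m := ⟨hm.ne'⟩
  obtain ⟨b, hb_nonneg, hb_ne, hAb⟩ := hA.exists_nonneg_mulVec_eq_zero
  have hb_pos := hA.pos_of_nonneg hconn hb_nonneg hb_ne hAb
  exact ⟨b, hb_pos, hAb, fun x hx => hA.eq_smul_of_mulVec_eq_zero hconn hb_pos hAb hx⟩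

theorem stmt3 {m : ℕ} (hm : 2 ≤ m) (A : Matrix (Fin m) (Fin m) ℝ)
    (hA : IsKirchhoff A)
    (hedge : ∃ i j, step A j i)
    (hconn : ∀ u v : Fin m, Relation.ReflTransGen (step A) u v) :
    ∃ b : Fin m → ℝ, (∀ j, 0 < b j) ∧ A.mulVec b = 0 ∧
      ∀ x : Fin m → ℝ, A.mulVec x = 0 → ∃ t : ℝ, x = t • b :=
  stmt3_general A hA hconn
end

section
/- Consider the mass-action ODE x' = Y·A_k·Ψ(x) on ℝ^n_{>0}, where Ψ_j(x) = ∏_{i=1}^n x_i^{Y_{ij}}. Suppose there is a Kirchhoff matrix A_b and a strictly positive vector c ∈ ℝ^n such that Y·A_k = T·Y·A_b with T = diag(c). Then for any solution x(t) of the original ODE, the function y(t) = T^{-1}·x(t) solves y' = Y·A_k'·Ψ(y), where A_k' = A_b·diag(Ψ(c)). -/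
open Matrix Finset

/-- The mass-action monomial vector `Ψ_j(x) = ∏ i, x i ^ Y i j`. -/
noncomputable def massAction {n m : ℕ} (Y : Matrix (Fin n) (Fin m) ℝ)
    (x : Fin n → ℝ) (j : Fin m) : ℝ :=
  ∏ i, x i ^ Y i j

/-!
Monomials are multiplicative, so `Ψ(T⁻¹ x) = Ψ(x) / Ψ(c)` componentwise; the factor
`diag (Ψ c)` in `A_k'` cancels this division, and `Y A_k = T Y A_b` shows that the remaining
rate `Y A_b Ψ(x)` is exactly `T⁻¹` times the original rate `Y A_k Ψ(x)`.
-/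

theorem massAction_pos {n m : ℕ} (Y : Matrix (Fin n) (Fin m) ℝ) {c : Fin n → ℝ}
    (hc : ∀ i, 0 < c i) (j : Fin m) : 0 < massAction Y c j :=
  Finset.prod_pos fun i _ => Real.rpow_pos_of_pos (hc i) _

theorem massAction_div {n m : ℕ} (Y : Matrix (Fin n) (Fin m) ℝ) {x c : Fin n → ℝ}
    (hx : ∀ i, 0 ≤ x i) (hc : ∀ i, 0 ≤ c i) (j : Fin m) :
    massAction Y (fun i => x i / c i) j = massAction Y x j / massAction Y c j := by
  rw [massAction, massAction, massAction, ← Finset.prod_div_distrib]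
  exact Finset.prod_congr rfl fun i _ => Real.div_rpow (hx i) (hc i) _

theorem Matrix.mul_diagonal_mulVec_div {ι κ K : Type*} [Fintype κ] [DecidableEq κ] [Field K]
    (B : Matrix ι κ K) {w : κ → K} (hw : ∀ j, w j ≠ 0) (v : κ → K) :
    (B * diagonal w) *ᵥ (fun j => v j / w j) = B *ᵥ v := by
  rw [← mulVec_mulVec]
  congr 1
  funext j
  rw [mulVec_diagonal, mul_div_cancel₀ _ (hw j)]

theorem stmt5_general {n m : ℕ} (Y : Matrix (Fin n) (Fin m) ℝ)
    (Ak Ab : Matrix (Fin m) (Fin m) ℝ)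
    (c : Fin n → ℝ) (hc : ∀ i, 0 < c i)
    (hconj : Y * Ak = Matrix.diagonal c * Y * Ab)
    (Ak' : Matrix (Fin m) (Fin m) ℝ)
    (hAk' : Ak' = Ab * Matrix.diagonal (massAction Y c))
    (x : ℝ → (Fin n → ℝ)) (hx : ∀ t i, 0 < x t i)
    (hode : ∀ t i, HasDerivAt (fun s => x s i)
      ((Y * Ak).mulVec (massAction Y (x t)) i) t) :
    ∀ t i, HasDerivAt (fun s => x s i / c i)
      ((Y * Ak').mulVec (massAction Y (fun i' => x t i' / c i')) i) t := by
  intro t i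
  have hΨ : massAction Y (fun i' => x t i' / c i')
      = fun j => massAction Y (x t) j / massAction Y c j :=
    funext (massAction_div Y (fun i' => (hx t i').le) fun i' => (hc i').le)
  have hrate : ((Y * Ak') *ᵥ massAction Y (fun i' => x t i' / c i')) i
      = ((Y * Ak) *ᵥ massAction Y (x t)) i / c i := by
    rw [hΨ, hAk', ← Matrix.mul_assoc,
      mul_diagonal_mulVec_div _ fun j => (massAction_pos Y hc j).ne', hconj,
      Matrix.mul_assoc, ← mulVec_mulVec _ (diagonal c), mulVec_diagonal, mul_div_cancel_left₀ _ (hc i).ne']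
  rw [hrate]
  exact (hode t i).div_const (c i)

theorem stmt5 {n m : ℕ} (Y : Matrix (Fin n) (Fin m) ℝ) (hY : ∀ i j, 0 ≤ Y i j)
    (Ak Ab : Matrix (Fin m) (Fin m) ℝ)
    (hAk : IsKirchhoff Ak) (hAb : IsKirchhoff Ab)
    (c : Fin n → ℝ) (hc : ∀ i, 0 < c i)
    (hconj : Y * Ak = Matrix.diagonal c * Y * Ab)
    (Ak' : Matrix (Fin m) (Fin m) ℝ)
    (hAk' : Ak' = Ab * Matrix.diagonal (massAction Y c))
    (x : ℝ → (Fin n → ℝ)) (hx : ∀ t i, 0 < x t i)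
    (hode : ∀ t i, HasDerivAt (fun s => x s i)
      ((Y * Ak).mulVec (massAction Y (x t)) i) t) :
    ∀ t i, HasDerivAt (fun s => x s i / c i)
      ((Y * Ak').mulVec (massAction Y (fun i' => x t i' / c i')) i) t :=
  stmt5_general Y Ak Ab c hc hconj Ak' hAk' x hx hode
end

section
/- Let A be an m×m Kirchhoff matrix whose associated directed graph is weakly reversible with ℓ linkage classes. Then ker(A) contains ℓ linearly independent nonnegative vectors with pairwise disjoint supports equal to the linkage classes; in particular dim ker(A) ≥ ℓ. -/
open Matrix Finset

open Relation

lemma posPart_closed {m : ℕ} (A : Matrix (Fin m) (Fin m) ℝ) (hA : IsKirchhoff A)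
    (x : Fin m → ℝ) (hx : A.mulVec x = 0) :
    ∀ j i, 0 < x j → step A j i → 0 < x i := by
  classical
  set T : Finset (Fin m) := univ.filter (fun i => 0 < x i) with hT
  have hsum0 : ∑ j, (∑ i ∈ T, A i j) * x j = 0 := by
    have h0 : ∑ i ∈ T, A.mulVec x i = 0 := by simp [hx]
    calc ∑ j, (∑ i ∈ T, A i j) * x j
        = ∑ j, ∑ i ∈ T, A i j * x j := by
          refine Finset.sum_congr rfl fun j _ => ?_
          rw [Finset.sum_mul]
      _ = ∑ i ∈ T, ∑ j, A i j * x j := Finset.sum_comm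
      _ = 0 := by simpa [Matrix.mulVec, dotProduct] using h0
  have hnonpos : ∀ j ∈ (univ : Finset (Fin m)), (∑ i ∈ T, A i j) * x j ≤ 0 := by
    intro j _
    rcases lt_trichotomy (x j) 0 with h | h | h
    · have hpos : 0 ≤ ∑ i ∈ T, A i j := by
        refine Finset.sum_nonneg fun i hi => ?_
        have hi' : 0 < x i := by simpa [hT] using hi
        exact hA.1 i j (fun e => absurd (e ▸ hi') (not_lt.2 h.le))
      exact mul_nonpos_of_nonneg_of_nonpos hpos h.le
    · simp [h]
    · have hjT : j ∈ T := by simp [hT, h]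
      have hsplit : ∑ i ∈ T, A i j + ∑ i ∈ univ.filter (fun i => ¬ 0 < x i), A i j = 0 := by
        rw [hT, Finset.sum_filter_add_sum_filter_not]
        exact hA.2 j
      have hcomp : 0 ≤ ∑ i ∈ univ.filter (fun i => ¬ 0 < x i), A i j := by
        refine Finset.sum_nonneg fun i hi => ?_
        have hi' : ¬ 0 < x i := by simpa using hi
        exact hA.1 i j (fun e => hi' (e ▸ h))
      have : ∑ i ∈ T, A i j ≤ 0 := by linarith
      exact mul_nonpos_of_nonpos_of_nonneg this h.le
  have hall := (Finset.sum_eq_zero_iff_of_nonpos hnonpos).1 hsum0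
  intro j i hj hstep
  by_contra hi
  -- for j with x j > 0, the j-th term vanishes, forcing all A i j = 0 for i ∉ T
  have hterm := hall j (mem_univ j)
  have hSj : ∑ i ∈ T, A i j = 0 := by
    rcases mul_eq_zero.1 hterm with h | h
    · exact h
    · exact absurd h hj.ne'
  have hsplit : ∑ i ∈ T, A i j + ∑ i ∈ univ.filter (fun i => ¬ 0 < x i), A i j = 0 := by
    rw [hT, Finset.sum_filter_add_sum_filter_not]; exact hA.2 j
  have hcompzero : ∑ i ∈ univ.filter (fun i => ¬ 0 < x i), A i j = 0 := by linarith
  have hiM : i ∈ univ.filter (fun i => ¬ 0 < x i) := by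
    simp only [Finset.mem_filter, Finset.mem_univ, true_and]; exact hi
  have hnonneg : ∀ i' ∈ univ.filter (fun i => ¬ 0 < x i), 0 ≤ A i' j := by
    intro i' hi'
    have : ¬ 0 < x i' := by simpa using hi'
    exact hA.1 i' j (fun e => this (e ▸ hj))
  have hAij : A i j = 0 :=
    (Finset.sum_eq_zero_iff_of_nonneg hnonneg).1 hcompzero i hiM
  exact absurd hAij hstep.2.ne'

lemma reach_pos {m : ℕ} (A : Matrix (Fin m) (Fin m) ℝ) (hA : IsKirchhoff A)
    (x : Fin m → ℝ) (hx : A.mulVec x = 0) {j v : Fin m}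
    (hj : 0 < x j) (h : Relation.ReflTransGen (step A) j v) : 0 < x v := by
  induction h with
  | refl => exact hj
  | tail _ hstep ih => exact posPart_closed A hA x hx _ _ ih hstep

lemma exists_class_kernel {m : ℕ} (A : Matrix (Fin m) (Fin m) ℝ) (hA : IsKirchhoff A)
    (hWR : WeaklyReversible A) (C : Set (Fin m)) (u : Fin m) (hu : u ∈ C)
    (hC : ∀ w ∈ C, ∀ v, v ∈ C ↔
      (Relation.ReflTransGen (step A) w v ∧ Relation.ReflTransGen (step A) v w)) :
    ∃ x : Fin m → ℝ, A.mulVec x = 0 ∧ (∀ j ∈ C, 0 < x j) ∧ ∀ j ∉ C, x j = 0 := by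
  classical
  haveI : Fintype ↥C := Fintype.ofFinite _
  haveI : Nonempty ↥C := ⟨⟨u, hu⟩⟩
  have hclose : ∀ j ∈ C, ∀ i, step A j i → i ∈ C := by
    intro j hj i hstep
    have h1 : Relation.ReflTransGen (step A) j i := ReflTransGen.single hstep
    exact (hC j hj i).2 ⟨h1, hWR j i h1⟩
  have hzero : ∀ j ∈ C, ∀ i, i ∉ C → A i j = 0 := by
    intro j hj i hi
    by_contra hne
    have hij : i ≠ j := fun e => hi (e ▸ hj)
    have hpos : 0 < A i j := lt_of_le_of_ne (hA.1 i j hij) (Ne.symm hne)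
    exact hi (hclose j hj i ⟨hij, hpos⟩)
  set B : Matrix ↥C ↥C ℝ := A.submatrix Subtype.val Subtype.val with hB
  have hcolsum : ∀ j : ↥C, ∑ i : ↥C, B i j = 0 := by
    intro j
    have h1 : ∑ i ∈ univ.filter (· ∈ C), A i (j : Fin m) = ∑ i : ↥C, B i j :=
      Finset.sum_subtype _ (by simp) _
    have h2 : ∑ i ∈ univ.filter (fun i => ¬ i ∈ C), A i (j : Fin m) = 0 :=
      Finset.sum_eq_zero fun i hi => hzero j j.2 i (by simpa using hi)
    have h3 := hA.2 (j : Fin m)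
    rw [← Finset.sum_filter_add_sum_filter_not univ (· ∈ C)] at h3
    rw [← h1]; linarith
  have h1B : (1 : ↥C → ℝ) ᵥ* B = 0 := by
    funext j
    simpa [Matrix.vecMul, dotProduct] using hcolsum j
  have hdet : B.det = 0 :=
    Matrix.exists_vecMul_eq_zero_iff.1 ⟨1, fun h => by
      have := congrFun h ⟨u, hu⟩; simp at this, h1B⟩
  obtain ⟨v, hv0, hv⟩ := Matrix.exists_mulVec_eq_zero_iff.2 hdet
  set x : Fin m → ℝ := fun j => if h : j ∈ C then v ⟨j, h⟩ else 0 with hxdef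
  have hxsupp : ∀ j ∉ C, x j = 0 := fun j hj => by simp [hxdef, hj]
  have hx_eq : ∀ i, A.mulVec x i = ∑ j : ↥C, A i (j : Fin m) * v j := by
    intro i
    have : A.mulVec x i = ∑ j, A i j * x j := rfl
    rw [this, ← Finset.sum_filter_add_sum_filter_not univ (· ∈ C)]
    have h2 : ∑ j ∈ univ.filter (fun j => ¬ j ∈ C), A i j * x j = 0 :=
      Finset.sum_eq_zero fun j hj => by
        rw [hxsupp j (by simpa using hj), mul_zero]
    rw [h2, add_zero, Finset.sum_subtype (p := (· ∈ C)) _ (by simp) (fun j => A i j * x j)]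
    refine Finset.sum_congr rfl fun j _ => ?_
    simp [hxdef, j.2]
  have hker : A.mulVec x = 0 := by
    funext i
    rw [hx_eq i]
    by_cases hi : i ∈ C
    · have := congrFun hv ⟨i, hi⟩
      simpa [hB, Matrix.mulVec, dotProduct] using this
    · simp only [Pi.zero_apply]
      exact Finset.sum_eq_zero fun j _ => by rw [hzero j j.2 i hi, zero_mul]
  -- find a sign
  obtain ⟨j0, hj0⟩ : ∃ j0 : ↥C, v j0 ≠ 0 := by
    by_contra h
    push_neg at h
    exact hv0 (funext h)
  have hxj0 : x (j0 : Fin m) ≠ 0 := by simpa [hxdef, j0.2] using hj0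
  rcases lt_or_gt_of_ne hxj0 with h | h
  · -- use -x
    refine ⟨-x, by rw [Matrix.mulVec_neg, hker, neg_zero], ?_, fun j hj => by
      simp [hxsupp j hj]⟩
    intro j hj
    have hreach : Relation.ReflTransGen (step A) (j0 : Fin m) j :=
      ((hC _ j0.2 j).1 hj).1
    have : 0 < (-x) (j0 : Fin m) := by simpa using neg_pos.2 h
    have := reach_pos A hA (-x) (by rw [Matrix.mulVec_neg, hker, neg_zero]) this hreach
    simpa using this
  · refine ⟨x, hker, ?_, hxsupp⟩
    intro j hj
    have hreach : Relation.ReflTransGen (step A) (j0 : Fin m) j :=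
      ((hC _ j0.2 j).1 hj).1
    exact reach_pos A hA x hker h hreach

theorem stmt11 {m ℓ : ℕ} (A : Matrix (Fin m) (Fin m) ℝ) (hA : IsKirchhoff A)
    (hWR : WeaklyReversible A)
    (Λ : Fin ℓ → Set (Fin m))
    -- each Λ k is a full mutual-reachability class
    (hclass : ∀ k, ∀ u ∈ Λ k, ∀ v, v ∈ Λ k ↔
      (Relation.ReflTransGen (step A) u v ∧ Relation.ReflTransGen (step A) v u))
    -- each linkage class contains at least one edge
    (hedge : ∀ k, ∃ u ∈ Λ k, ∃ i, step A u i)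
    -- distinct indices give distinct classes
    (hdisj : ∀ k k', k ≠ k' → Λ k ≠ Λ k') :
    ℓ ≤ Module.finrank ℝ (LinearMap.ker (Matrix.mulVecLin A)) ∧
    ∃ b : Fin ℓ → (Fin m → ℝ),
      LinearIndependent ℝ b ∧
      (∀ k, A.mulVec (b k) = 0) ∧
      (∀ k j, (j ∈ Λ k → 0 < b k j) ∧ (j ∉ Λ k → b k j = 0)) := by
  classical
  -- pick a base point in each class
  have hpt : ∀ k, ∃ u, u ∈ Λ k := fun k => (hedge k).imp fun u hu => hu.1
  choose pt hpt using hpt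
  -- classes are pairwise disjoint
  have hdisjoint : ∀ k k', k ≠ k' → ∀ j, j ∈ Λ k → j ∉ Λ k' := by
    intro k k' hkk j hj hj'
    refine hdisj k k' hkk ?_
    ext v
    rw [hclass k j hj v, ← hclass k' j hj' v]
  -- construct kernel vectors
  have hex : ∀ k, ∃ x : Fin m → ℝ, A.mulVec x = 0 ∧ (∀ j ∈ Λ k, 0 < x j) ∧
      ∀ j ∉ Λ k, x j = 0 :=
    fun k => exists_class_kernel A hA hWR (Λ k) (pt k) (hpt k) (hclass k)
  choose b hb1 hb2 hb3 using hex
  have hli : LinearIndependent ℝ b := by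
    rw [Fintype.linearIndependent_iff]
    intro g hg k
    have := congrFun hg (pt k)
    simp only [Finset.sum_apply, Pi.smul_apply, smul_eq_mul, Pi.zero_apply] at this
    rw [Finset.sum_eq_single k] at this
    · have hbpos := hb2 k (pt k) (hpt k)
      rcases mul_eq_zero.1 this with h | h
      · exact h
      · exact absurd h hbpos.ne'
    · intro k' _ hk'
      rw [hb3 k' (pt k) (hdisjoint k k' (Ne.symm hk') (pt k) (hpt k)), mul_zero]
    · intro h; exact absurd (Finset.mem_univ k) h
  constructor
  · -- finrank bound
    set b' : Fin ℓ → ↥(LinearMap.ker (Matrix.mulVecLin A)) :=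
      fun k => ⟨b k, by rw [LinearMap.mem_ker, Matrix.mulVecLin_apply]; exact hb1 k⟩ with hb'
    have hli' : LinearIndependent ℝ b' := by
      have hcomp : (LinearMap.ker (Matrix.mulVecLin A)).subtype ∘ b' = b := rfl
      exact LinearIndependent.of_comp _ (by rw [hcomp]; exact hli)
    simpa using hli'.fintype_card_le_finrank
  · exact ⟨b, hli, hb1, fun k j => ⟨fun h => hb2 k j h, fun h => hb3 k j h⟩⟩
end

section
/- Conversely, if a finite directed graph G admits a positive circulation (positive edge weights with weighted in-degree equal to weighted out-degree at every vertex), then G is weakly reversible: for every edge (u,v) there is a directed path from v back to u. -/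
/-!
If some edge `(u, v)` had no path from `v` back to `u`, let `S` be the set of vertices reachable
from `v`. No edge leaves `S`, so conservation summed over `S` says that the weight entering `S`
equals the weight of the edges inside `S`; the edge `(u, v)` enters `S` from outside with
positive weight, a contradiction.
-/

open Finset

section Circulation

variable {V M : Type*} [DecidableEq V]

def IsCirculation [AddCommMonoid M] (E : Finset (V × V)) (w : V × V → M) : Prop :=
  ∀ v : V, ∑ e ∈ E.filter (fun e => e.2 = v), w e = ∑ e ∈ E.filter (fun e => e.1 = v), w e

theorem IsCirculation.sum_filter_snd_mem_eq_sum_filter_fst_mem [AddCommMonoid M]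
    {E : Finset (V × V)} {w : V × V → M} (hcirc : IsCirculation E w) (S : Finset V) :
    ∑ e ∈ E.filter (fun e => e.2 ∈ S), w e = ∑ e ∈ E.filter (fun e => e.1 ∈ S), w e := by
  rw [← sum_fiberwise_eq_sum_filter E S Prod.snd w, ← sum_fiberwise_eq_sum_filter E S Prod.fst w]
  exact sum_congr rfl fun v _ => hcirc v

theorem IsCirculation.fst_mem_of_snd_mem [AddCommMonoid M] [PartialOrder M]
    [IsOrderedCancelAddMonoid M] {E : Finset (V × V)} {w : V × V → M} (hcirc : IsCirculation E w)
    (hw : ∀ e ∈ E, 0 < w e) {S : Finset V} (hS : ∀ e ∈ E, e.1 ∈ S → e.2 ∈ S) :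
    ∀ e ∈ E, e.2 ∈ S → e.1 ∈ S := by
  intro e he he₂
  by_contra he₁
  have hsub : E.filter (fun f => f.1 ∈ S) ⊆ E.filter (fun f => f.2 ∈ S) := fun f hf => by
    rw [mem_filter] at hf ⊢
    exact ⟨hf.1, hS f hf.1 hf.2⟩
  have hlt : ∑ f ∈ E.filter (fun f => f.1 ∈ S), w f < ∑ f ∈ E.filter (fun f => f.2 ∈ S), w f :=
    sum_lt_sum_of_subset hsub (mem_filter.2 ⟨he, he₂⟩) (fun h => he₁ (mem_filter.1 h).2)
      (hw e he) fun f hf _ => (hw f (mem_filter.1 hf).1).le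
  exact hlt.ne (hcirc.sum_filter_snd_mem_eq_sum_filter_fst_mem S).symm

end Circulation

theorem stmt15_general {V : Type*} [DecidableEq V]
    (E : Finset (V × V))
    (w : V × V → ℝ) (hw : ∀ e ∈ E, 0 < w e)
    (hcirc : ∀ v : V, ∑ e ∈ E.filter (fun e => e.2 = v), w e
                    = ∑ e ∈ E.filter (fun e => e.1 = v), w e) :
    ∀ e ∈ E, Relation.ReflTransGen (fun a b => (a, b) ∈ E) e.2 e.1 := by
  classical
  intro e he
  let reach := Relation.ReflTransGen (fun a b => (a, b) ∈ E) e.2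
  let S : Finset V := (E.image Prod.snd).filter reach
  have hS : ∀ f ∈ E, f.1 ∈ S → f.2 ∈ S := fun f hf h₁ =>
    mem_filter.2 ⟨mem_image_of_mem _ hf, (mem_filter.1 h₁).2.tail hf⟩
  have he₂ : e.2 ∈ S := mem_filter.2 ⟨mem_image_of_mem _ he, .refl⟩
  exact (mem_filter.1 (IsCirculation.fst_mem_of_snd_mem hcirc hw hS e he he₂)).2

theorem stmt15 {V : Type*} [Fintype V] [DecidableEq V]
    (E : Finset (V × V))
    (w : V × V → ℝ) (hw : ∀ e ∈ E, 0 < w e)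
    (hcirc : ∀ v : V, ∑ e ∈ E.filter (fun e => e.2 = v), w e
                    = ∑ e ∈ E.filter (fun e => e.1 = v), w e) :
    ∀ e ∈ E, Relation.ReflTransGen (fun a b => (a, b) ∈ E) e.2 e.1 :=
  stmt15_general E w hw hcirc
end
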